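/- arXiv:1604.02649 — 4 statements merged into one kernel-verified Lean document; each statement's English description precedes it below -/
import Mathlib

section
/- Let f(z) = z ∏_{n≥1}(1 - z²/u_n²) with u_n > 0 and ∑ 1/u_n² < ∞, and let r* ∈ (0, u_1) satisfy f'(r*) = 0. Then for all z with |z| < r*, Re(z f'(z)/f(z)) > 0. -/
/-!
For `‖z‖ < u 0` the logarithmic derivative of the canonical product gives
`z f'(z) / f(z) = 1 + 2 ∑ z² / (z² - u_n²)`. Termwise,
`Re (z² / (z² - u²)) ≥ ‖z‖² / (‖z‖² - u²)`, and `t ↦ t / (t - u²)` is strictly decreasing on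
`[0, u²)`. Hence for `‖z‖ < r` the real part strictly exceeds the value of the same expression at
`r`, which is `r f'(r) / f(r) = 0`.
-/

open Complex Metric Filter

theorem summable_one_div_sub {𝕜 ι : Type*} [NormedField 𝕜] [CompleteSpace 𝕜] {a : ι → 𝕜}
    (ha0 : ∀ i, a i ≠ 0) (ha : Summable fun i => ‖a i‖⁻¹) (w : 𝕜) :
    Summable fun i => 1 / (w - a i) := by
  have hfar : ∀ᶠ i in cofinite, 2 * ‖w‖ < ‖a i‖ := by
    filter_upwards [ha.tendsto_cofinite_zero.eventually_lt_const
      (inv_pos.2 (by positivity : (0 : ℝ) < 2 * ‖w‖ + 1))] with i hi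
    have := (inv_lt_inv₀ (norm_pos_iff.2 (ha0 i)) (by positivity)).1 hi
    linarith
  refine (ha.mul_left 2).of_norm_bounded_eventually ?_
  filter_upwards [hfar] with i hi
  have hdist : ‖a i‖ / 2 ≤ ‖w - a i‖ := by
    have := norm_sub_norm_le (a i) w
    rw [norm_sub_rev] at this
    linarith
  rw [norm_div, norm_one, ← div_eq_mul_inv]
  calc 1 / ‖w - a i‖ ≤ 1 / (‖a i‖ / 2) :=
        one_div_le_one_div_of_le (by linarith [norm_nonneg w]) hdist
    _ = 2 / ‖a i‖ := by ring

section CanonicalProduct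

variable {ι : Type*} {a : ι → ℂ}

theorem hasProdLocallyUniformlyOn_one_sub_div (ha : Summable fun i => ‖a i‖⁻¹) (R : ℝ) :
    HasProdLocallyUniformlyOn (fun i w => 1 - w / a i) (fun w => ∏' i, (1 - w / a i))
      (ball 0 R) := by
  simp_rw [sub_eq_add_neg]
  refine Summable.hasProdLocallyUniformlyOn_one_add isOpen_ball (ha.mul_left R)
    (.of_forall fun i w hw => ?_) fun i => by fun_prop
  rw [norm_neg, norm_div, div_eq_mul_inv]
  exact mul_le_mul_of_nonneg_right (mem_ball_zero_iff.1 hw).le (by positivity)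

theorem differentiable_tprod_one_sub_div (ha : Summable fun i => ‖a i‖⁻¹) :
    Differentiable ℂ fun w => ∏' i, (1 - w / a i) := by
  intro w
  have h := hasProdLocallyUniformlyOn_iff_tendstoLocallyUniformlyOn.1
    (hasProdLocallyUniformlyOn_one_sub_div ha (‖w‖ + 1))
  exact (h.differentiableOn (.of_forall fun s => by fun_prop) isOpen_ball).differentiableAt
    (isOpen_ball.mem_nhds (by simp))

theorem one_sub_div_ne_zero {c w : ℂ} (hc : c ≠ 0) (hw : w ≠ c) : 1 - w / c ≠ 0 := by
  rwa [sub_ne_zero, ne_comm, Ne, div_eq_one_iff_eq hc]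

theorem tprod_one_sub_div_ne_zero (ha0 : ∀ i, a i ≠ 0) (ha : Summable fun i => ‖a i‖⁻¹)
    {w : ℂ} (hw : ∀ i, w ≠ a i) : ∏' i, (1 - w / a i) ≠ 0 := by
  simp_rw [sub_eq_add_neg]
  refine tprod_one_add_ne_zero_of_summable (fun i => ?_) ?_
  · exact sub_eq_add_neg (1 : ℂ) _ ▸ one_sub_div_ne_zero (ha0 i) (hw i)
  · simpa [div_eq_mul_inv] using ha.mul_left ‖w‖

-- At `w = c` both sides are `0` by the convention `x / 0 = 0`.
theorem logDeriv_one_sub_div {c : ℂ} (hc : c ≠ 0) (w : ℂ) :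
    logDeriv (fun w => 1 - w / c) w = 1 / (w - c) := by
  rw [logDeriv_apply]
  simp only [deriv_const_sub, deriv_div_const, deriv_id'']
  rw [one_sub_div hc, div_div_eq_mul_div, neg_mul, one_div_mul_cancel hc, ← neg_sub w c,
    neg_div_neg_eq]

theorem logDeriv_tprod_one_sub_div (ha0 : ∀ i, a i ≠ 0) (ha : Summable fun i => ‖a i‖⁻¹)
    {w : ℂ} (hw : ∀ i, w ≠ a i) :
    logDeriv (fun w => ∏' i, (1 - w / a i)) w = ∑' i, 1 / (w - a i) := by
  simp_rw [← logDeriv_one_sub_div (ha0 _)]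
  refine logDeriv_tprod_eq_tsum isOpen_ball (mem_ball_zero_iff.2 (lt_add_one ‖w‖))
    (fun i => one_sub_div_ne_zero (ha0 i) (hw i)) (fun i => by fun_prop) ?_
    (hasProdLocallyUniformlyOn_one_sub_div ha _).multipliableLocallyUniformlyOn
    (tprod_one_sub_div_ne_zero ha0 ha hw)
  simpa only [logDeriv_one_sub_div (ha0 _)] using summable_one_div_sub ha0 ha w

theorem summable_sq_div_sq_sub (ha0 : ∀ i, a i ≠ 0) (ha : Summable fun i => ‖a i‖⁻¹) (z : ℂ) :
    Summable fun i => z ^ 2 / (z ^ 2 - a i) := by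
  simpa only [mul_one_div] using (summable_one_div_sub ha0 ha (z ^ 2)).mul_left (z ^ 2)

theorem mul_logDeriv_mul_tprod_one_sub_sq_div (ha0 : ∀ i, a i ≠ 0)
    (ha : Summable fun i => ‖a i‖⁻¹) {z : ℂ} (hz : z ≠ 0) (hza : ∀ i, z ^ 2 ≠ a i) :
    z * logDeriv (fun z => z * ∏' i, (1 - z ^ 2 / a i)) z =
      1 + 2 * ∑' i, z ^ 2 / (z ^ 2 - a i) := by
  set P : ℂ → ℂ := fun w => ∏' i, (1 - w / a i)
  have hP : Differentiable ℂ P := differentiable_tprod_one_sub_div ha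
  have hfun : (fun z => z * ∏' i, (1 - z ^ 2 / a i)) = fun z => id z * (P ∘ (· ^ 2)) z := rfl
  rw [hfun, logDeriv_mul z hz (tprod_one_sub_div_ne_zero ha0 ha hza) differentiableAt_id
    (hP.differentiableAt.comp z (by fun_prop)), logDeriv_id,
    logDeriv_comp hP.differentiableAt (by fun_prop), logDeriv_tprod_one_sub_div ha0 ha hza]
  simp only [deriv_pow_field, ← mul_one_div (z ^ 2), tsum_mul_left]
  field_simp
  ring

theorem re_mul_logDeriv_mul_tprod_one_sub_sq_div (ha0 : ∀ i, a i ≠ 0)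
    (ha : Summable fun i => ‖a i‖⁻¹) {z : ℂ} (hz : z ≠ 0) (hza : ∀ i, z ^ 2 ≠ a i) :
    (z * logDeriv (fun z => z * ∏' i, (1 - z ^ 2 / a i)) z).re =
      1 + 2 * ∑' i, (z ^ 2 / (z ^ 2 - a i)).re := by
  rw [mul_logDeriv_mul_tprod_one_sub_sq_div ha0 ha hz hza, add_re, one_re, mul_re, re_ofNat,
    im_ofNat, zero_mul, sub_zero, re_tsum (summable_sq_div_sq_sub ha0 ha z)]

end CanonicalProduct

theorem div_sub_le_re_div_sub {w : ℂ} {a : ℝ} (h : ‖w‖ < a) :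
    ‖w‖ / (‖w‖ - a) ≤ (w / (w - a)).re := by
  have ha : 0 < a := (norm_nonneg w).trans_lt h
  have hdist : a - ‖w‖ ≤ ‖w - a‖ := by
    simpa [norm_sub_rev w, abs_of_pos ha] using norm_sub_norm_le (a : ℂ) w
  have hwa : w - a ≠ 0 := norm_pos_iff.1 (by linarith)
  have hinv : -(a - ‖w‖)⁻¹ ≤ ((w - a)⁻¹).re := by
    refine le_trans ?_ (neg_le_of_abs_le (abs_re_le_norm _))
    rw [norm_inv, neg_le_neg_iff]
    exact inv_anti₀ (by linarith) hdist
  have hsplit : w / (w - a) = 1 + a * (w - a)⁻¹ := by field_simp; ring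
  have hlhs : ‖w‖ / (‖w‖ - a) = 1 + a * -(a - ‖w‖)⁻¹ := by
    field_simp [(by linarith : ‖w‖ - a ≠ 0), (by linarith : a - ‖w‖ ≠ 0)]; ring
  rw [hsplit, hlhs, add_re, one_re, re_ofReal_mul]
  gcongr

theorem sq_ne_sq_of_norm_lt {w : ℂ} {b : ℝ} (h : ‖w‖ < b) : w ^ 2 ≠ (b : ℂ) ^ 2 := by
  intro hwb
  have := congrArg norm hwb
  rw [norm_pow, norm_pow, norm_real, Real.norm_eq_abs, sq_abs] at this
  nlinarith [norm_nonneg w]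

theorem div_sub_lt_div_sub {s t a : ℝ} (hs : 0 ≤ s) (hst : s < t) (hta : t < a) :
    t / (t - a) < s / (s - a) := by
  have hsa : s - a < 0 := by linarith
  have hta' : t - a < 0 := by linarith
  have hdiff : s / (s - a) - t / (t - a) = a * (t - s) / ((s - a) * (t - a)) := by
    field_simp [hsa.ne, hta'.ne]; ring
  have : 0 < a * (t - s) / ((s - a) * (t - a)) :=
    div_pos (mul_pos (by linarith) (by linarith)) (mul_pos_of_neg_of_neg hsa hta')
  linarith

theorem sq_div_sq_sub_sq_lt_re {z : ℂ} {r b : ℝ} (hzr : ‖z‖ < r) (hrb : r < b) :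
    r ^ 2 / (r ^ 2 - b ^ 2) < (z ^ 2 / (z ^ 2 - (b : ℂ) ^ 2)).re := by
  have hz := norm_nonneg z
  calc r ^ 2 / (r ^ 2 - b ^ 2) < ‖z‖ ^ 2 / (‖z‖ ^ 2 - b ^ 2) :=
        div_sub_lt_div_sub (by positivity) (by gcongr) (by gcongr; linarith)
    _ ≤ (z ^ 2 / (z ^ 2 - (b : ℂ) ^ 2)).re := by
        have h := div_sub_le_re_div_sub (w := z ^ 2) (a := b ^ 2)
          (by rw [norm_pow]; gcongr; linarith)
        rwa [norm_pow, ofReal_pow] at h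

theorem re_logderiv_pos_general (u : ℕ → ℝ) (humono : StrictMono u)
    (husum : Summable (fun n => 1 / (u n) ^ 2))
    (f : ℂ → ℂ) (hf : ∀ z : ℂ, f z = z * ∏' n : ℕ, (1 - z ^ 2 / ((u n : ℂ)) ^ 2))
    (r : ℝ) (hr : r ∈ Set.Ioo (0 : ℝ) (u 0)) (hcrit : deriv f (r : ℂ) = 0) :
    ∀ z : ℂ, z ≠ 0 → ‖z‖ < r → 0 < (z * deriv f z / f z).re := by
  intro z hz hzr
  obtain ⟨hr0, hru⟩ := hr
  have hrun : ∀ n, r < u n := fun n => hru.trans_le (humono.monotone n.zero_le)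
  have ha0 : ∀ n, (u n : ℂ) ^ 2 ≠ 0 := fun n =>
    pow_ne_zero 2 (ofReal_ne_zero.2 (hr0.trans (hrun n)).ne')
  have ha : Summable fun n => ‖(u n : ℂ) ^ 2‖⁻¹ := by simpa [norm_pow, one_div] using husum
  have hre : ∀ w : ℂ, w ≠ 0 → ‖w‖ ≤ r →
      (w * deriv f w / f w).re = 1 + 2 * ∑' n, (w ^ 2 / (w ^ 2 - (u n : ℂ) ^ 2)).re := by
    intro w hw hwr
    rw [mul_div_assoc, ← logDeriv_apply, funext hf]
    exact re_mul_logDeriv_mul_tprod_one_sub_sq_div ha0 ha hw fun n =>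
      sq_ne_sq_of_norm_lt (hwr.trans_lt (hrun n))
  have hsum_r : ∑' n, ((r : ℂ) ^ 2 / ((r : ℂ) ^ 2 - (u n : ℂ) ^ 2)).re = -1 / 2 := by
    have := hre r (ofReal_ne_zero.2 hr0.ne') (by simp [abs_of_pos hr0])
    rw [hcrit, mul_zero, zero_div, zero_re] at this
    linarith
  have hterm : ∀ n, ((r : ℂ) ^ 2 / ((r : ℂ) ^ 2 - (u n : ℂ) ^ 2)).re <
      (z ^ 2 / (z ^ 2 - (u n : ℂ) ^ 2)).re := fun n => by
    simpa only [← ofReal_pow, ← ofReal_sub, ← ofReal_div, ofReal_re] using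
      sq_div_sq_sub_sq_lt_re hzr (hrun n)
  have hsummable : ∀ w : ℂ, Summable fun n => (w ^ 2 / (w ^ 2 - (u n : ℂ) ^ 2)).re := fun w =>
    (hasSum_re (summable_sq_div_sq_sub ha0 ha w).hasSum).summable
  rw [hre z hz hzr.le]
  linarith [Summable.tsum_lt_tsum (fun n => (hterm n).le) (hterm 0) (hsummable r) (hsummable z)]

/-- If `f(z) = z ∏ (1 - z²/u_n²)` with positive strictly increasing zeros `u_n`,
`∑ 1/u_n² < ∞`, and `r* ∈ (0, u_1)` satisfies `f'(r*) = 0`, then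
`Re(z f'(z)/f(z)) > 0` for all nonzero `z` with `|z| < r*`. -/
theorem re_logderiv_pos (u : ℕ → ℝ) (hupos : ∀ n, 0 < u n) (humono : StrictMono u)
    (husum : Summable (fun n => 1 / (u n) ^ 2))
    (f : ℂ → ℂ) (hf : ∀ z : ℂ, f z = z * ∏' n : ℕ, (1 - z ^ 2 / ((u n : ℂ)) ^ 2))
    (r : ℝ) (hr : r ∈ Set.Ioo (0 : ℝ) (u 0)) (hcrit : deriv f (r : ℂ) = 0) :
    ∀ z : ℂ, z ≠ 0 → ‖z‖ < r → 0 < (z * deriv f z / f z).re :=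
  re_logderiv_pos_general u humono husum f hf r hr hcrit
end

section
/- The function ν ↦ r*(φ_ν) is strictly increasing on (-1, ∞), where r*(φ_ν) is the smallest positive root of 1/r = ∑_{n≥1} 1/(j_{ν,n}² - r). -/
open Set

/-- The radius of starlikeness `r*(φ_ν)`, the smallest positive root of
`1/r = ∑ 1/(j_{ν,n}² - r)`, is strictly increasing in `ν` on `(-1, ∞)`,
given that each zero `j_{ν,n}` is positive and strictly increasing in `ν`. -/
theorem radius_strict_mono (j : ℝ → ℕ → ℝ)
    (hjpos : ∀ ν ∈ Ioi (-1 : ℝ), ∀ n, 0 < j ν n)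
    (hjmono : ∀ n, StrictMonoOn (fun ν => j ν n) (Ioi (-1 : ℝ)))
    (hjsum : ∀ ν ∈ Ioi (-1 : ℝ), Summable (fun n => 1 / (j ν n) ^ 2))
    (hsum : ∀ ν ∈ Ioi (-1 : ℝ), ∀ x : ℝ, x < (j ν 0) ^ 2 →
      Summable (fun n => 1 / ((j ν n) ^ 2 - x)))
    (r : ℝ → ℝ)
    (hr : ∀ ν ∈ Ioi (-1 : ℝ), r ν ∈ Ioo (0 : ℝ) ((j ν 0) ^ 2))
    (hroot : ∀ ν ∈ Ioi (-1 : ℝ), 1 / r ν = ∑' n : ℕ, 1 / ((j ν n) ^ 2 - r ν))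
    (hpos : ∀ ν ∈ Ioi (-1 : ℝ), ∀ x ∈ Ioo (0 : ℝ) (r ν),
      0 < 1 / x - ∑' n : ℕ, 1 / ((j ν n) ^ 2 - x)) :
    StrictMonoOn r (Ioi (-1 : ℝ)) := by
  -- Step 1: all (j ν n)^2 lie strictly above r ν.
  have hA : ∀ ν ∈ Ioi (-1 : ℝ), ∀ n, r ν < (j ν n) ^ 2 := by
    intro ν hν n
    by_contra hcon
    push_neg at hcon
    set a : ℝ := (j ν n) ^ 2 with ha
    have ha0 : 0 < a := pow_pos (hjpos ν hν n) 2
    -- the set of indices with square of zero below a is finite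
    have hfin : {m : ℕ | (j ν m) ^ 2 < a}.Finite := by
      have h0 := (hjsum ν hν).tendsto_atTop_zero
      have hev : ∀ᶠ m in Filter.atTop, 1 / (j ν m) ^ 2 < 1 / a :=
        h0.eventually_lt_const (by positivity)
      rw [← Nat.cofinite_eq_atTop] at hev
      refine (Filter.eventually_cofinite.mp hev).subset ?_
      intro m hm
      simp only [mem_setOf_eq] at hm ⊢
      have hjm : 0 < (j ν m) ^ 2 := pow_pos (hjpos ν hν m) 2
      exact not_lt.mpr (le_of_lt (one_div_lt_one_div_of_lt hjm hm))
    set t : Finset ℕ := hfin.toFinset with ht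
    have hmt : ∀ m ∈ t, (j ν m) ^ 2 < a := by
      intro m hm
      rw [ht, Set.Finite.mem_toFinset] at hm
      exact hm
    have hnt : n ∉ t := by
      intro hn
      exact lt_irrefl a (hmt n hn)
    -- lower bound for negative terms
    set d : ℝ := if h : t.Nonempty then t.inf' h (fun m => (a - (j ν m) ^ 2) / 2) else 1
      with hd
    have hd0 : 0 < d := by
      rw [hd]
      split_ifs with h
      · apply Finset.lt_inf'_iff h (f := fun m => (a - (j ν m) ^ 2) / 2) |>.mpr
        intro m hm
        have := hmt m hm
        linarith
      · norm_num
    have hdm : ∀ m ∈ t, d ≤ (a - (j ν m) ^ 2) / 2 := by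
      intro m hm
      rw [hd]
      rw [dif_pos ⟨m, hm⟩]
      exact Finset.inf'_le _ hm
    set B : ℝ := ∑ m ∈ t, 2 / ((j ν m) ^ 2 - a) with hB
    have hB0 : B ≤ 0 := by
      apply Finset.sum_nonpos
      intro m hm
      have := hmt m hm
      apply div_nonpos_of_nonneg_of_nonpos <;> linarith
    set M : ℝ := 2 / a - B + 1 with hM
    have hM0 : 0 < M := by
      have : 0 < 2 / a := by positivity
      rw [hM]; linarith
    set ε : ℝ := min (min (1 / M) (a / 2)) d with hε
    have hε0 : 0 < ε := by
      apply lt_min (lt_min (by positivity) (by linarith)) hd0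
    have hεM : ε ≤ 1 / M := le_trans (min_le_left _ _) (min_le_left _ _)
    have hεa : ε ≤ a / 2 := le_trans (min_le_left _ _) (min_le_right _ _)
    have hεd : ε ≤ d := min_le_right _ _
    set x : ℝ := a - ε with hx
    have hx0 : 0 < x := by rw [hx]; linarith
    have hxa : x < a := by rw [hx]; linarith
    have hxr : x < r ν := lt_of_lt_of_le hxa hcon
    have hxj0 : x < (j ν 0) ^ 2 := lt_of_lt_of_le hxr (le_of_lt (hr ν hν).2)
    have hS : Summable (fun m => 1 / ((j ν m) ^ 2 - x)) := hsum ν hν x hxj0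
    -- lower bound on the tsum
    have hsum_ge : ∑ m ∈ insert n t, 1 / ((j ν m) ^ 2 - x)
        ≤ ∑' m : ℕ, 1 / ((j ν m) ^ 2 - x) := by
      apply Summable.sum_le_tsum _ _ hS
      intro m hm
      have hmnt : m ∉ t := fun h => hm (Finset.mem_insert_of_mem h)
      have : ¬ (j ν m) ^ 2 < a := by
        intro h
        exact hmnt (by rw [ht, Set.Finite.mem_toFinset]; exact h)
      have : a ≤ (j ν m) ^ 2 := not_lt.mp this
      have : 0 < (j ν m) ^ 2 - x := by linarith
      positivity
    rw [Finset.sum_insert hnt] at hsum_ge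
    have hfn : 1 / ((j ν n) ^ 2 - x) = 1 / ε := by
      rw [hx, ← ha]; ring_nf
    have hBle : B ≤ ∑ m ∈ t, 1 / ((j ν m) ^ 2 - x) := by
      rw [hB]
      apply Finset.sum_le_sum
      intro m hm
      have hma := hmt m hm
      have h1 : (j ν m) ^ 2 - x ≤ ((j ν m) ^ 2 - a) / 2 := by
        have := hdm m hm
        rw [hx]; linarith
      have h2 : ((j ν m) ^ 2 - a) / 2 < 0 := by linarith
      calc 2 / ((j ν m) ^ 2 - a) = 1 / (((j ν m) ^ 2 - a) / 2) := by
            rw [one_div_div]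
        _ ≤ 1 / ((j ν m) ^ 2 - x) := one_div_le_one_div_of_neg_of_le h2 h1
    have hεM' : M ≤ 1 / ε := by
      calc M = 1 / (1 / M) := by rw [one_div_one_div]
        _ ≤ 1 / ε := one_div_le_one_div_of_le hε0 hεM
    have hxinv : 1 / x ≤ 2 / a := by
      have h1 : a / 2 ≤ x := by rw [hx]; linarith
      calc 1 / x ≤ 1 / (a / 2) := one_div_le_one_div_of_le (by linarith) h1
        _ = 2 / a := one_div_div _ _
    have hp := hpos ν hν x ⟨hx0, hxr⟩
    rw [hfn] at hsum_ge
    rw [hM] at hεM'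
    linarith
  -- Step 2: the main monotonicity argument.
  intro ν hν μ hμ hνμ
  by_contra hcon
  push_neg at hcon
  set x : ℝ := r μ with hxdef
  have hx0 : 0 < x := (hr μ hμ).1
  have hxν : ∀ m, x < (j ν m) ^ 2 := fun m => lt_of_le_of_lt hcon (hA ν hν m)
  have hterm : ∀ m, 1 / ((j μ m) ^ 2 - x) < 1 / ((j ν m) ^ 2 - x) := by
    intro m
    have hjlt : j ν m < j μ m := hjmono m hν hμ hνμ
    have hsq : (j ν m) ^ 2 < (j μ m) ^ 2 :=
      pow_lt_pow_left₀ hjlt (le_of_lt (hjpos ν hν m)) (by norm_num)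
    have h1 : 0 < (j ν m) ^ 2 - x := by linarith [hxν m]
    apply one_div_lt_one_div_of_lt h1
    linarith
  have hSν : Summable (fun m => 1 / ((j ν m) ^ 2 - x)) :=
    hsum ν hν x (hxν 0)
  have hSμ : Summable (fun m => 1 / ((j μ m) ^ 2 - x)) :=
    hsum μ hμ x (hr μ hμ).2
  have hlt : (∑' m : ℕ, 1 / ((j μ m) ^ 2 - x)) < ∑' m : ℕ, 1 / ((j ν m) ^ 2 - x) :=
    Summable.tsum_lt_tsum (fun m => le_of_lt (hterm m)) (hterm 0) hSμ hSν
  have h1 : 1 / x = ∑' m : ℕ, 1 / ((j μ m) ^ 2 - x) := hroot μ hμ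
  have h2 : (∑' m : ℕ, 1 / ((j ν m) ^ 2 - x)) ≤ 1 / x := by
    rcases lt_or_eq_of_le hcon with h | h
    · have := hpos ν hν x ⟨hx0, h⟩
      linarith
    · have hrootν := hroot ν hν
      rw [← h] at hrootν
      exact le_of_eq hrootν.symm
  linarith
end

section
/- r*(φ_ν)/(4(ν+1)) → 1 as ν → ∞, and moreover r*(φ_ν) = 4(ν+1)(1 - 1/ν + O(ν^{-2})) as ν → ∞. -/
/-!
Divided by `4(ν+1)`, the two Euler–Rayleigh bounds become explicit algebraic functions of `ν`.
The lower one is `ρ₃^{-1/3}/(ν+1)`, whose cube is `(ν+2)(ν+3)/(ν²+8ν+23)`; comparing cubes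
shows it is at least `1 - 1/ν`. The upper one is the rational function
`(ν²+8ν+23)(ν+2)(ν+4)/P(ν)` with `P(ν) = ν⁴+15ν³+90ν²+267ν+287`, which exceeds `1 - 1/ν` by
`(4ν³+25ν²+164ν+287)/(ν P(ν)) ≤ 4/ν²`. So `r ν/(4(ν+1)) - (1 - 1/ν)` lies in `[0, 4/ν²]` for
all `ν > 0`, which gives both the `O(ν⁻²)` estimate and the limit.
-/

open Filter Asymptotics

namespace EulerRayleigh

noncomputable def rho3 (ν : ℝ) : ℝ :=
  (ν ^ 2 + 8 * ν + 23) / ((ν + 1) ^ 3 * (ν + 2) * (ν + 3))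

noncomputable def rho4 (ν : ℝ) : ℝ :=
  (ν ^ 4 + 15 * ν ^ 3 + 90 * ν ^ 2 + 267 * ν + 287) /
    ((ν + 1) ^ 4 * (ν + 2) ^ 2 * (ν + 3) * (ν + 4))

variable {ν : ℝ}

lemma rho3_pos (hν : -1 < ν) : 0 < rho3 ν := by
  have h1 : 0 < ν + 1 := by linarith
  have h2 : 0 < ν + 2 := by linarith
  have h3 : 0 < ν + 3 := by linarith
  exact div_pos (by nlinarith) (by positivity)

lemma rho3_rpow_div_pow_three (hν : -1 < ν) :
    (rho3 ν ^ (-(1 : ℝ) / 3) / (ν + 1)) ^ 3 = (ν + 2) * (ν + 3) / (ν ^ 2 + 8 * ν + 23) := by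
  have h1 : 0 < ν + 1 := by linarith
  have h2 : 0 < ν + 2 := by linarith
  have h3 : 0 < ν + 3 := by linarith
  have hcube : (rho3 ν ^ (-(1 : ℝ) / 3)) ^ 3 = (rho3 ν)⁻¹ := by
    rw [← Real.rpow_natCast, ← Real.rpow_mul (rho3_pos hν).le]
    norm_num [Real.rpow_neg_one]
  have hQ : 0 < ν ^ 2 + 8 * ν + 23 := by nlinarith
  rw [div_pow, hcube, rho3, inv_div, div_div, div_eq_div_iff (by positivity) hQ.ne']
  ring

lemma one_sub_inv_le_rho3_rpow_div (hν : 0 < ν) :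
    1 - 1 / ν ≤ rho3 ν ^ (-(1 : ℝ) / 3) / (ν + 1) := by
  rw [← Odd.pow_le_pow (by decide : Odd 3), rho3_rpow_div_pow_three (by linarith),
    one_sub_div hν.ne', div_pow, div_le_div_iff₀ (by positivity) (by nlinarith)]
  nlinarith [pow_pos hν 3, pow_pos hν 4, sq_nonneg (ν - 1)]

lemma rho3_div_rho4_div (hν : -1 < ν) :
    rho3 ν / rho4 ν / (ν + 1) =
      (ν ^ 4 + 14 * ν ^ 3 + 79 * ν ^ 2 + 202 * ν + 184) /
        (ν ^ 4 + 15 * ν ^ 3 + 90 * ν ^ 2 + 267 * ν + 287) := by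
  have h1 : 0 < ν + 1 := by linarith
  have h2 : 0 < ν + 2 := by linarith
  have h3 : 0 < ν + 3 := by linarith
  have hP : 0 < ν ^ 4 + 15 * ν ^ 3 + 90 * ν ^ 2 + 267 * ν + 287 := by
    nlinarith [pow_pos h1 4, pow_pos h1 3, pow_pos h1 2]
  unfold rho3 rho4
  field_simp
  ring

lemma rho3_div_rho4_div_le (hν : 0 < ν) :
    rho3 ν / rho4 ν / (ν + 1) ≤ 1 - 1 / ν + 4 / ν ^ 2 := by
  have hP : 0 < ν ^ 4 + 15 * ν ^ 3 + 90 * ν ^ 2 + 267 * ν + 287 := by positivity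
  rw [rho3_div_rho4_div (by linarith), div_le_iff₀ hP]
  have hν2 : 1 - 1 / ν + 4 / ν ^ 2 = (ν ^ 2 - ν + 4) / ν ^ 2 := by field_simp
  rw [hν2, div_mul_eq_mul_div, le_div_iff₀ (by positivity)]
  nlinarith [pow_pos hν 3, pow_pos hν 2]

lemma div_sub_one_sub_inv_mem_Icc {r : ℝ} (hν : 0 < ν)
    (hbounds : 4 * rho3 ν ^ (-(1 : ℝ) / 3) < r ∧ r < 4 * rho3 ν / rho4 ν) :
    0 ≤ r / (4 * (ν + 1)) - (1 - 1 / ν) ∧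
      r / (4 * (ν + 1)) - (1 - 1 / ν) ≤ 4 / ν ^ 2 := by
  have h4 : 0 < 4 * (ν + 1) := by linarith
  have hlo : rho3 ν ^ (-(1 : ℝ) / 3) / (ν + 1) < r / (4 * (ν + 1)) := by
    rw [← mul_div_mul_left _ _ (four_ne_zero (α := ℝ))]
    exact div_lt_div_of_pos_right hbounds.1 h4
  have hhi : r / (4 * (ν + 1)) < rho3 ν / rho4 ν / (ν + 1) := by
    rw [← mul_div_mul_left (rho3 ν / rho4 ν) _ (four_ne_zero (α := ℝ)), ← mul_div_assoc]
    exact div_lt_div_of_pos_right hbounds.2 h4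
  constructor
  · linarith [one_sub_inv_le_rho3_rpow_div hν]
  · linarith [rho3_div_rho4_div_le hν]

end EulerRayleigh

/-- If the radius of starlikeness `r ν` of `φ_ν(z) = 2^ν Γ(ν+1) z^{1-ν/2} J_ν(√z)`
satisfies the Euler–Rayleigh bounds `4 ρ₃^{-1/3} < r ν < 4 ρ₃/ρ₄`, then
`r ν/(4(ν+1)) → 1` as `ν → ∞`, and moreover
`r ν = 4(ν+1)(1 - 1/ν + O(ν⁻²))` as `ν → ∞`. -/
theorem radius_asymptotics (r : ℝ → ℝ)
    (hbounds : ∀ ν : ℝ, -1 < ν →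
      4 * ((ν ^ 2 + 8 * ν + 23) / ((ν + 1) ^ 3 * (ν + 2) * (ν + 3))) ^ (-(1 : ℝ) / 3)
        < r ν ∧
      r ν < 4 * ((ν ^ 2 + 8 * ν + 23) / ((ν + 1) ^ 3 * (ν + 2) * (ν + 3))) /
        ((ν ^ 4 + 15 * ν ^ 3 + 90 * ν ^ 2 + 267 * ν + 287) /
          ((ν + 1) ^ 4 * (ν + 2) ^ 2 * (ν + 3) * (ν + 4)))) :
    Tendsto (fun ν => r ν / (4 * (ν + 1))) atTop (nhds 1) ∧
    (fun ν : ℝ => r ν / (4 * (ν + 1)) - (1 - 1 / ν)) =O[atTop]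
      (fun ν : ℝ => 1 / ν ^ 2) := by
  have hIcc : ∀ᶠ ν : ℝ in atTop,
      0 ≤ r ν / (4 * (ν + 1)) - (1 - 1 / ν) ∧
        r ν / (4 * (ν + 1)) - (1 - 1 / ν) ≤ 4 / ν ^ 2 := by
    filter_upwards [eventually_gt_atTop 0] with ν hν
    exact EulerRayleigh.div_sub_one_sub_inv_mem_Icc hν (hbounds ν (by linarith))
  have hO : (fun ν : ℝ => r ν / (4 * (ν + 1)) - (1 - 1 / ν)) =O[atTop]
      (fun ν : ℝ => 1 / ν ^ 2) := by
    refine IsBigO.of_bound 4 (hIcc.mono fun ν h => ?_)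
    rw [Real.norm_of_nonneg h.1, Real.norm_of_nonneg (by positivity), ← mul_div_assoc, mul_one]
    exact h.2
  have hsub : Tendsto (fun ν : ℝ => 1 - 1 / ν) atTop (nhds (1 - 0)) :=
    tendsto_const_nhds.sub (tendsto_const_nhds.div_atTop tendsto_id)
  have hsq : Tendsto (fun ν : ℝ => 1 / ν ^ 2) atTop (nhds 0) :=
    tendsto_const_nhds.div_atTop (tendsto_pow_atTop two_ne_zero)
  refine ⟨?_, hO⟩
  simpa using (hO.trans_tendsto hsq).add hsub
end

section
/- For ν ∈ [-1/2, 1/2], the first Rayleigh sum of the positive zeros h_{ν,n} of the Struve function H_ν satisfies ∑_{n≥1} 1/h_{ν,n}² = 1/(3(2ν+3)). -/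
/-!
Both sides of the factorization have the form `1 - a x² + O(x⁴)` near `x = 0`. For the series,
whose coefficients are bounded, `a = 1 / (3 (2ν + 3))` is read off its first two terms. For the
product, `1 - s ≤ ∏ (1 - fᵢ) ≤ exp (-s)` with `s = ∑ fᵢ = x² ∑ 1 / h_n²` pins it to
`1 - s + O(s²)`, so `a = ∑ 1 / h_n²`.
-/

open Finset Filter Topology Real

theorem one_sub_sum_le_prod_one_sub {ι R : Type*} [CommRing R] [LinearOrder R]
    [IsStrictOrderedRing R] {f : ι → R} (s : Finset ι) (h0 : ∀ i ∈ s, 0 ≤ f i)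
    (h1 : ∀ i ∈ s, f i ≤ 1) : 1 - ∑ i ∈ s, f i ≤ ∏ i ∈ s, (1 - f i) := by
  induction s using Finset.cons_induction with
  | empty => simp
  | cons a s ha ih =>
    simp only [mem_cons, forall_eq_or_imp] at h0 h1
    rw [prod_cons, sum_cons]
    have hs : 0 ≤ ∑ i ∈ s, f i := sum_nonneg h0.2
    nlinarith [ih h0.2 h1.2, h0.1, h1.1]

/-- `1 - s ≤ ∏ (1 - f i) ≤ exp (-s) ≤ 1 - s + s²` with `s = ∑ f i`. -/
theorem abs_tprod_one_sub_sub_le {ι : Type*} {f : ι → ℝ} (hf0 : ∀ i, 0 ≤ f i)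
    (hf : Summable f) (hle : ∑' i, f i ≤ 1) :
    |∏' i, (1 - f i) - (1 - ∑' i, f i)| ≤ (∑' i, f i) ^ 2 := by
  set s := ∑' i, f i
  have hf1 : ∀ i, f i ≤ 1 := fun i => (hf.le_tsum i fun j _ => hf0 j).trans hle
  have hprod : HasProd (fun i => 1 - f i) (∏' i, (1 - f i)) := by
    simpa only [sub_eq_add_neg] using (Real.multipliable_one_add_of_summable hf.neg).hasProd
  have lower : 1 - s ≤ ∏' i, (1 - f i) :=
    le_hasProd_of_le_prod hprod fun t =>
      (sub_le_sub_left (hf.sum_le_tsum t fun i _ => hf0 i) 1).trans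
        (one_sub_sum_le_prod_one_sub t (fun i _ => hf0 i) fun i _ => hf1 i)
  have upper : ∏' i, (1 - f i) ≤ Real.exp (-s) :=
    le_of_tendsto_of_tendsto' hprod hf.hasSum.neg.rexp fun t =>
      prod_le_prod (fun i _ => sub_nonneg.2 (hf1 i)) fun i _ => Real.one_sub_le_exp_neg (f i)
  have exp_le : Real.exp (-s) ≤ 1 - s + s ^ 2 := by
    have hs : |-s| ≤ 1 := by rw [abs_neg, abs_of_nonneg (tsum_nonneg hf0)]; exact hle
    have := (abs_le.1 (Real.abs_exp_sub_one_sub_id_le hs)).2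
    linarith [neg_sq s]
  rw [abs_le]
  constructor <;> nlinarith

theorem abs_tsum_mul_pow_sub_le {c : ℕ → ℝ} {M y : ℝ} (hc : ∀ k, |c k| ≤ M)
    (hy : |y| ≤ 1 / 2) : |∑' k, c k * y ^ k - (c 0 + c 1 * y)| ≤ 2 * M * y ^ 2 := by
  have hM : 0 ≤ M := (abs_nonneg _).trans (hc 0)
  have hgeo : HasSum (fun k => M * |y| ^ k) (M * (1 - |y|)⁻¹) :=
    (hasSum_geometric_of_lt_one (abs_nonneg y) (by linarith)).mul_left M
  have hbound : ∀ k, ‖c (k + 2) * y ^ k‖ ≤ M * |y| ^ k := fun k => by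
    rw [norm_mul, norm_pow, Real.norm_eq_abs, Real.norm_eq_abs]
    exact mul_le_mul_of_nonneg_right (hc _) (by positivity)
  have htail : Summable fun k => c (k + 2) * y ^ k := hgeo.summable.of_norm_bounded hbound
  have hsplit : ∑' k, c k * y ^ k = c 0 + c 1 * y + y ^ 2 * ∑' k, c (k + 2) * y ^ k := by
    have hsum : Summable fun k => c k * y ^ k := by
      refine (summable_nat_add_iff 2).1 ((htail.mul_left (y ^ 2)).congr fun k => ?_)
      ring
    rw [← hsum.sum_add_tsum_nat_add 2, ← tsum_mul_left]
    simp only [sum_range_succ, sum_range_zero]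
    congr 1
    · ring
    · exact tsum_congr fun k => by ring
  have htail_le : |∑' k, c (k + 2) * y ^ k| ≤ 2 * M := by
    refine (tsum_of_norm_bounded hgeo hbound).trans ?_
    rw [← div_eq_mul_inv, div_le_iff₀ (by linarith)]
    nlinarith
  rw [hsplit, add_sub_cancel_left, abs_mul, abs_of_nonneg (sq_nonneg y)]
  nlinarith [sq_nonneg y]

theorem eq_of_forall_abs_sub_le_mul {a b C δ : ℝ} (hδ : 0 < δ)
    (h : ∀ y, 0 < y → y < δ → |a - b| ≤ C * y) : a = b := by
  have hlim : Tendsto (fun y => C * y) (𝓝 0) (𝓝 0) := by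
    simpa using (tendsto_id (x := 𝓝 (0 : ℝ))).const_mul C
  have : |a - b| ≤ 0 :=
    ge_of_tendsto (hlim.mono_left nhdsWithin_le_nhds) <| by
      filter_upwards [Ioo_mem_nhdsGT hδ] with y hy using h y hy.1 hy.2
  exact sub_eq_zero.1 (abs_nonpos_iff.1 this)

theorem one_le_ascPochhammer_eval {S : Type*} [Semiring S] [PartialOrder S] [IsOrderedRing S]
    (n : ℕ) {s : S} (hs : 1 ≤ s) : 1 ≤ (ascPochhammer S n).eval s := by
  induction n with
  | zero => simp
  | succ n ih =>
    rw [ascPochhammer_succ_eval]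
    exact one_le_mul_of_one_le_of_one_le ih (le_add_of_le_of_nonneg hs n.cast_nonneg)

theorem Real.Gamma_le_Gamma_natCast_add {s : ℝ} (hs : 1 ≤ s) (n : ℕ) :
    Real.Gamma s ≤ Real.Gamma (n + s) := by
  induction n with
  | zero => simp
  | succ n ih =>
    have hns : 1 ≤ (n : ℝ) + s := le_add_of_nonneg_of_le n.cast_nonneg hs
    rw [Nat.cast_succ, add_right_comm, Real.Gamma_add_one (by positivity)]
    exact ih.trans (le_mul_of_one_le_left (Real.Gamma_pos_of_pos (by positivity)).le hns)

theorem Real.Gamma_three_halves : Real.Gamma (3 / 2) = √π / 2 := by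
  rw [show (3 / 2 : ℝ) = 1 / 2 + 1 by norm_num, Real.Gamma_add_one (by norm_num),
    Real.Gamma_one_half_eq]
  ring

/-- The coefficient of `z^{2k}` in `(2/√π) · √π 2^ν z^{-ν-1} Γ(ν+3/2) H_ν(z)`. -/
noncomputable def struveCoeff (ν : ℝ) (k : ℕ) : ℝ :=
  (-1) ^ k / (4 ^ k * Real.Gamma ((k : ℝ) + 3 / 2) * (ascPochhammer ℝ k).eval (ν + 3 / 2))

theorem abs_struveCoeff_le {ν : ℝ} (hν : -1 / 2 ≤ ν) (k : ℕ) :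
    |struveCoeff ν k| ≤ 2 / √π := by
  have hpoch : 1 ≤ (ascPochhammer ℝ k).eval (ν + 3 / 2) :=
    one_le_ascPochhammer_eval k (by linarith)
  have hGamma : √π / 2 ≤ Real.Gamma ((k : ℝ) + 3 / 2) :=
    Real.Gamma_three_halves ▸ Real.Gamma_le_Gamma_natCast_add (by norm_num) k
  have hden :
      √π / 2 ≤ 4 ^ k * Real.Gamma ((k : ℝ) + 3 / 2) * (ascPochhammer ℝ k).eval (ν + 3 / 2) :=
    calc √π / 2 = 1 * (√π / 2) * 1 := by ring
      _ ≤ _ := by gcongr; exact one_le_pow₀ (by norm_num)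
  have hden_pos := lt_of_lt_of_le (by positivity) hden
  rw [struveCoeff, abs_div, abs_pow, abs_neg, abs_one, one_pow, abs_of_pos hden_pos,
    one_div_le hden_pos (by positivity)]
  simpa using hden

theorem sqrt_pi_div_two_mul_struveCoeff_zero (ν : ℝ) : √π / 2 * struveCoeff ν 0 = 1 := by
  rw [struveCoeff]
  simp [Real.Gamma_three_halves, Real.sqrt_ne_zero'.2 Real.pi_pos]

theorem sqrt_pi_div_two_mul_struveCoeff_one (ν : ℝ) :
    √π / 2 * struveCoeff ν 1 = -(1 / (3 * (2 * ν + 3))) := by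
  have hGamma : Real.Gamma ((1 : ℕ) + 3 / 2) = 3 / 2 * (√π / 2) := by
    rw [← Real.Gamma_three_halves, ← Real.Gamma_add_one (by norm_num)]
    norm_num
  rw [struveCoeff, hGamma]
  have := Real.sqrt_ne_zero'.2 Real.pi_pos
  simp only [pow_one, ascPochhammer_one, Polynomial.eval_X]
  field_simp
  ring

theorem abs_sqrt_pi_div_two_mul_tsum_struveCoeff_sub_le {ν y : ℝ} (hν : -1 / 2 ≤ ν)
    (hy : |y| ≤ 1 / 2) :
    |√π / 2 * ∑' k, struveCoeff ν k * y ^ k - (1 - 1 / (3 * (2 * ν + 3)) * y)| ≤ 2 * y ^ 2 := by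
  have hπ : 0 < √π / 2 := by positivity
  calc |√π / 2 * ∑' k, struveCoeff ν k * y ^ k - (1 - 1 / (3 * (2 * ν + 3)) * y)|
      = √π / 2 * |∑' k, struveCoeff ν k * y ^ k - (struveCoeff ν 0 + struveCoeff ν 1 * y)| := by
        rw [← abs_of_pos hπ, ← abs_mul, abs_of_pos hπ, mul_sub (√π / 2), mul_add (√π / 2),
          ← mul_assoc, sqrt_pi_div_two_mul_struveCoeff_zero, sqrt_pi_div_two_mul_struveCoeff_one]
        congr 1
        ring
    _ ≤ √π / 2 * (2 * (2 / √π) * y ^ 2) := by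
        gcongr
        exact abs_tsum_mul_pow_sub_le (abs_struveCoeff_le hν) hy
    _ = 2 * y ^ 2 := by
        field_simp

theorem tsum_struveCoeff_mul_sq_pow (ν x : ℝ) :
    ∑' k, struveCoeff ν k * (x ^ 2) ^ k =
      ∑' k : ℕ, (-1 : ℝ) ^ k * x ^ (2 * k) /
        (4 ^ k * Real.Gamma ((k : ℝ) + 3 / 2) * (ascPochhammer ℝ k).eval (ν + 3 / 2)) :=
  tsum_congr fun k => by rw [struveCoeff, pow_mul, mul_div_right_comm]

theorem rayleigh_sum_struve_general (ν : ℝ) (hν : ν ∈ Set.Icc (-(1:ℝ)/2) (1/2)) (h : ℕ → ℝ)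
    (hsum : Summable (fun n => 1 / (h n) ^ 2))
    (hfact : ∀ x : ℝ,
      (Real.sqrt Real.pi / 2) *
        ∑' k : ℕ, (-1 : ℝ) ^ k * x ^ (2 * k) /
          (4 ^ k * Real.Gamma ((k : ℝ) + 3/2) * (ascPochhammer ℝ k).eval (ν + 3/2))
      = ∏' n : ℕ, (1 - x ^ 2 / (h n) ^ 2)) :
    ∑' n : ℕ, 1 / (h n) ^ 2 = 1 / (3 * (2 * ν + 3)) := by
  set S := ∑' n : ℕ, 1 / (h n) ^ 2
  have hS : 0 ≤ S := tsum_nonneg fun n => by positivity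
  refine eq_of_forall_abs_sub_le_mul (C := 2 + S ^ 2) (δ := min (1 / 2) (1 / (S + 1)))
    (by positivity) fun y hy0 hyδ => ?_
  have hy : y ≤ 1 / 2 := hyδ.le.trans (min_le_left _ _)
  have hyS : y * S ≤ 1 := by
    have := hyδ.le.trans (min_le_right _ _)
    rw [le_div_iff₀ (by positivity)] at this
    nlinarith
  have hprod := abs_tprod_one_sub_sub_le (f := fun n => y * (1 / h n ^ 2))
    (fun n => by positivity) (hsum.mul_left y) (by rwa [tsum_mul_left])
  have hseries := abs_sqrt_pi_div_two_mul_tsum_struveCoeff_sub_le hν.1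
    ((abs_of_pos hy0).le.trans hy)
  rw [← Real.sq_sqrt hy0.le, tsum_struveCoeff_mul_sq_pow, hfact, Real.sq_sqrt hy0.le] at hseries
  rw [tsum_mul_left] at hprod
  simp only [mul_one_div] at hprod
  rw [abs_sub_comm] at hseries
  refine le_of_mul_le_mul_right ?_ hy0
  calc |S - 1 / (3 * (2 * ν + 3))| * y
      = |(1 - 1 / (3 * (2 * ν + 3)) * y) - (1 - y * S)| := by
        rw [← abs_of_pos hy0, ← abs_mul, abs_of_pos hy0]
        congr 1
        ring
    _ ≤ |(1 - 1 / (3 * (2 * ν + 3)) * y) - ∏' n, (1 - y / h n ^ 2)|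
        + |∏' n, (1 - y / h n ^ 2) - (1 - y * S)| := abs_sub_le _ _ _
    _ ≤ 2 * y ^ 2 + (y * S) ^ 2 := add_le_add hseries hprod
    _ = (2 + S ^ 2) * y * y := by ring

/-- For `ν ∈ [-1/2, 1/2]`, if `h n` are the positive zeros of the Struve function `H_ν`
(encoded by the factorization
`√π 2^ν z^{-ν-1} Γ(ν+3/2) H_ν(z) = (√π/2) ∑ (-1)^k z^{2k}/(4^k Γ(k+3/2)(ν+3/2)_k)
  = ∏ (1 - z²/h_k²)`),
then `∑ 1/h_n² = 1/(3(2ν+3))`. -/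
theorem rayleigh_sum_struve (ν : ℝ) (hν : ν ∈ Set.Icc (-(1:ℝ)/2) (1/2)) (h : ℕ → ℝ)
    (hpos : ∀ n, 0 < h n) (hmono : StrictMono h)
    (hsum : Summable (fun n => 1 / (h n) ^ 2))
    (hfact : ∀ x : ℝ,
      (Real.sqrt Real.pi / 2) *
        ∑' k : ℕ, (-1 : ℝ) ^ k * x ^ (2 * k) /
          (4 ^ k * Real.Gamma ((k : ℝ) + 3/2) * (ascPochhammer ℝ k).eval (ν + 3/2))
      = ∏' n : ℕ, (1 - x ^ 2 / (h n) ^ 2)) :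
    ∑' n : ℕ, 1 / (h n) ^ 2 = 1 / (3 * (2 * ν + 3)) :=
  rayleigh_sum_struve_general ν hν h hsum hfact
end
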